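/- If (P, F) is a Faigle geometry, then the lattice of flats (F, ⊆) is a finite semimodular lattice, with X ∧ Y = X ∩ Y and X ∨ Y = cl(X ∪ Y). -/

import Mathlib

/-- `X` is a down-set of the poset `P`. -/
def IsDownSet {P : Type*} [PartialOrder P] (X : Set P) : Prop :=
  ∀ ⦃x⦄, x ∈ X → ∀ ⦃y⦄, y ≤ x → y ∈ X

/-- `Y` covers `X` in the poset `(F, ⊆)`. -/
def CoversIn {P : Type*} (F : Set (Set P)) (X Y : Set P) : Prop :=
  X ⊂ Y ∧ ∀ Z ∈ F, ¬(X ⊂ Z ∧ Z ⊂ Y)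

/-- The closure operator associated to the closure system `F`:
`cl(X) = ⋂ {Y ∈ F : X ⊆ Y}`. -/
def clF {P : Type*} (F : Set (Set P)) (X : Set P) : Set P :=
  ⋂₀ {Y | Y ∈ F ∧ X ⊆ Y}

/-- `(P, F)` is a Faigle geometry. -/
structure IsFaigle {P : Type*} [PartialOrder P] [Finite P] (F : Set (Set P)) : Prop where
  univ_mem : Set.univ ∈ F
  inter_mem : ∀ X ∈ F, ∀ Y ∈ F, X ∩ Y ∈ F
  down : ∀ X ∈ F, IsDownSet X
  empty_mem : ∅ ∈ F
  Iic_mem : ∀ u : P, Set.Iic u ∈ F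
  Iio_mem : ∀ u : P, Set.Iio u ∈ F
  cp : ∀ (u : P), ∀ X ∈ F, u ∉ X → Set.Iio u ⊆ X →
      ∃ Y ∈ F, u ∈ Y ∧ CoversIn F X Y

/-!
Meets and joins are the usual ones of a finite closure system. For semimodularity, let
`X ∩ Y ⋖ X` and take a minimal `u ∈ X \ Y`; since `X` is a down-set, `⇓u ⊆ Y`, so (CP) gives a
flat `W ⋗ Y` containing `u`. Then `X ∩ Y ⊂ X ∩ W ⊆ X` forces `X ⊆ W`, hence
`Y ⊂ cl(X ∪ Y) ⊆ W`, and the covering `Y ⋖ W` forces `cl(X ∪ Y) = W`.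
-/

section Closure

variable {P : Type*} {F : Set (Set P)} {Z W : Set P}

lemma subset_clF (Z : Set P) : Z ⊆ clF F Z :=
  fun _ hz _ hW => hW.2 hz

lemma clF_subset (hW : W ∈ F) (hZW : Z ⊆ W) : clF F Z ⊆ W :=
  Set.sInter_subset_of_mem ⟨hW, hZW⟩

lemma clF_mem [Finite P] (huniv : Set.univ ∈ F) (hinter : ∀ X ∈ F, ∀ Y ∈ F, X ∩ Y ∈ F)
    (Z : Set P) : clF F Z ∈ F :=
  InfClosed.sInf_mem (fun X hX Y hY => hinter X hX Y hY) (Set.toFinite _) huniv fun _ h => h.1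

end Closure

namespace CoversIn

variable {P : Type*} {F : Set (Set P)} {X Y Z W : Set P}

lemma eq_of_ssubset_of_subset (h : CoversIn F X Y) (hZ : Z ∈ F) (hXZ : X ⊂ Z) (hZY : Z ⊆ Y) :
    Z = Y :=
  hZY.eq_or_ssubset.resolve_right fun hZY' => h.2 Z hZ ⟨hXZ, hZY'⟩

lemma subset_of_mem_diff (h : CoversIn F (X ∩ Y) X) (hXW : X ∩ W ∈ F) (hYW : Y ⊆ W)
    {u : P} (huX : u ∈ X) (huY : u ∉ Y) (huW : u ∈ W) : X ⊆ W := by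
  have hlt : X ∩ Y ⊂ X ∩ W :=
    Set.ssubset_iff_subset_ne.2
      ⟨Set.inter_subset_inter_right X hYW, fun heq => huY (heq ▸ ⟨huX, huW⟩ : u ∈ X ∩ Y).2⟩
  have heq : X ∩ W = X := h.eq_of_ssubset_of_subset hXW hlt Set.inter_subset_left
  exact Set.inter_eq_left.1 heq

end CoversIn

lemma IsDownSet.exists_Iio_subset_of_not_subset {P : Type*} [PartialOrder P] [WellFoundedLT P]
    {X Y : Set P} (hX : IsDownSet X) (hXY : ¬X ⊆ Y) : ∃ u ∈ X, u ∉ Y ∧ Set.Iio u ⊆ Y := by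
  obtain ⟨u, ⟨huX, huY⟩, hmin⟩ :=
    wellFounded_lt.has_min (X \ Y) (Set.sdiff_nonempty.2 hXY)
  refine ⟨u, huX, huY, fun v hv => ?_⟩
  by_contra hvY
  exact hmin v ⟨hX huX hv.le, hvY⟩ hv

namespace IsFaigle

variable {P : Type*} [PartialOrder P] [Finite P] {F : Set (Set P)} {X Y : Set P}

lemma coversIn_clF_union (hF : IsFaigle F) (hX : X ∈ F) (hY : Y ∈ F)
    (h : CoversIn F (X ∩ Y) X) : CoversIn F Y (clF F (X ∪ Y)) := by
  have hXY : ¬X ⊆ Y := fun hXY => h.1.ne (Set.inter_eq_left.2 hXY)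
  obtain ⟨u, huX, huY, hIio⟩ := (hF.down X hX).exists_Iio_subset_of_not_subset hXY
  obtain ⟨W, hW, huW, hYW⟩ := hF.cp u Y hY huY hIio
  have hXW : X ⊆ W := h.subset_of_mem_diff (hF.inter_mem X hX W hW) hYW.1.1 huX huY huW
  have hclY : Y ⊂ clF F (X ∪ Y) :=
    Set.ssubset_iff_subset_ne.2 ⟨Set.subset_union_right.trans (subset_clF _),
      fun heq => huY (heq ▸ subset_clF _ (Or.inl huX))⟩
  have hclW : clF F (X ∪ Y) = W :=
    hYW.eq_of_ssubset_of_subset (clF_mem hF.univ_mem hF.inter_mem _) hclY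
      (clF_subset hW (Set.union_subset hXW hYW.1.1))
  exact hclW ▸ hYW

end IsFaigle

/-- The lattice of flats `(F, ⊆)` of a Faigle geometry is a finite semimodular lattice,
with meet `X ∩ Y` and join `cl(X ∪ Y)`. -/
theorem flats_semimodular_lattice {P : Type*} [PartialOrder P] [Finite P]
    {F : Set (Set P)} (hF : IsFaigle F) :
    F.Finite ∧
    ∀ X ∈ F, ∀ Y ∈ F,
      -- the meet of `X` and `Y` in `(F, ⊆)` is `X ∩ Y`
      (X ∩ Y ∈ F ∧ X ∩ Y ⊆ X ∧ X ∩ Y ⊆ Y ∧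
        (∀ Z ∈ F, Z ⊆ X → Z ⊆ Y → Z ⊆ X ∩ Y)) ∧
      -- the join of `X` and `Y` in `(F, ⊆)` is `cl(X ∪ Y)`
      (clF F (X ∪ Y) ∈ F ∧ X ⊆ clF F (X ∪ Y) ∧ Y ⊆ clF F (X ∪ Y) ∧
        (∀ Z ∈ F, X ⊆ Z → Y ⊆ Z → clF F (X ∪ Y) ⊆ Z)) ∧
      -- semimodularity of `(F, ⊆)`
      (CoversIn F (X ∩ Y) X → CoversIn F Y (clF F (X ∪ Y))) := by
  refine ⟨Set.toFinite F, fun X hX Y hY => ⟨?meet, ?join, hF.coversIn_clF_union hX hY⟩⟩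
  case meet =>
    exact ⟨hF.inter_mem X hX Y hY, Set.inter_subset_left, Set.inter_subset_right,
      fun Z _ hZX hZY => Set.subset_inter hZX hZY⟩
  case join =>
    exact ⟨clF_mem hF.univ_mem hF.inter_mem _, Set.subset_union_left.trans (subset_clF _),
      Set.subset_union_right.trans (subset_clF _),
      fun Z hZ hXZ hYZ => clF_subset hZ (Set.union_subset hXZ hYZ)⟩
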